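/- arXiv:2603.15278 — 3 statements merged into one kernel-verified Lean document; each statement's English description precedes it below -/
import Mathlib

section
/- Let p_j ≠ p_k in ℝ² with p_k − p_j = d_jk·(cos α, sin α), d_jk = ‖p_k − p_j‖, let u = (p_k − p_j)/d_jk, and let e = p_j + λ·(p_k − p_j) with λ ∈ [0,1]. Suppose at time t the trajectories have derivatives ṗ_j = v_j·R_{φ_j}(u), ṗ_k = −v_k·R_{φ_k}^T(u), and ė = μ·(cos ψ, sin ψ). Then the function t ↦ A(e(t), p_j(t), p_k(t)) has derivative at t equal to ½·[ v_j·‖e − p_k‖·sin φ_j + v_k·‖e − p_j‖·sin φ_k − d_jk·μ·sin(α − ψ) ]. (Closed-loop area rate under the edge-phase strategy, equation (18) of the paper.) -/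
open Real

noncomputable section

/-- The vector `(a, b)` in the Euclidean plane. -/
def vec2 (a b : ℝ) : EuclideanSpace ℝ (Fin 2) := (WithLp.equiv 2 (Fin 2 → ℝ)).symm ![a, b]

/-- Signed area `A(a,b,c) = ½·[a₁(b₂−c₂) + b₁(c₂−a₂) + c₁(a₂−b₂)]`. -/
def sarea (a b c : EuclideanSpace ℝ (Fin 2)) : ℝ :=
  (1/2) * (a 0 * (b 1 - c 1) + b 0 * (c 1 - a 1) + c 0 * (a 1 - b 1))

/-- `v^⊥ = (−v₂, v₁)`. -/
def perp (v : EuclideanSpace ℝ (Fin 2)) : EuclideanSpace ℝ (Fin 2) := vec2 (-(v 1)) (v 0)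

/-- Planar dot product. -/
def dot2 (u v : EuclideanSpace ℝ (Fin 2)) : ℝ := u 0 * v 0 + u 1 * v 1

/-- Clockwise rotation by `φ`: `R_φ(a,b) = (a cos φ + b sin φ, −a sin φ + b cos φ)`. -/
def rotCW (φ : ℝ) (v : EuclideanSpace ℝ (Fin 2)) : EuclideanSpace ℝ (Fin 2) :=
  vec2 (v 0 * Real.cos φ + v 1 * Real.sin φ) (-(v 0) * Real.sin φ + v 1 * Real.cos φ)

/-- Counterclockwise rotation by `φ` (the transpose `R_φ^T`). -/
def rotCCW (φ : ℝ) (v : EuclideanSpace ℝ (Fin 2)) : EuclideanSpace ℝ (Fin 2) :=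
  vec2 (v 0 * Real.cos φ - v 1 * Real.sin φ) (v 0 * Real.sin φ + v 1 * Real.cos φ)

/-! Twice the signed area, `2 A(a, b, c) = (b - a) × (c - a)`, is bilinear in the two differences,
so its rate follows from the product rule. While `a` stays on the edge from `b` to `c`, both
differences are multiples of `d = c - b`, and the rate collapses to
`½ [(1 - λ) b' × d + λ c' × d - a' × d]`. For `d = d_jk (cos α, sin α)` every term is elementary:
a unit vector rotated clockwise by `φ`, crossed with the unrotated one, gives `sin φ` (counterclockwise:
`-sin φ`), and `(cos ψ, sin ψ) × (cos α, sin α) = sin (α - ψ)`. -/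

@[simp]
lemma vec2_apply_zero (a b : ℝ) : vec2 a b 0 = a := rfl

@[simp]
lemma vec2_apply_one (a b : ℝ) : vec2 a b 1 = b := rfl

lemma dot2_vec2_cos_sin_self (α : ℝ) :
    dot2 (vec2 (Real.cos α) (Real.sin α)) (vec2 (Real.cos α) (Real.sin α)) = 1 := by
  simp only [dot2, vec2_apply_zero, vec2_apply_one]
  linear_combination Real.cos_sq_add_sin_sq α

def cross2 : EuclideanSpace ℝ (Fin 2) →ₗ[ℝ] EuclideanSpace ℝ (Fin 2) →ₗ[ℝ] ℝ :=
  LinearMap.mk₂ ℝ (fun v w => v 0 * w 1 - v 1 * w 0)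
    (fun _ _ _ => by simp only [PiLp.add_apply]; ring)
    (fun _ _ _ => by simp only [PiLp.smul_apply, smul_eq_mul]; ring)
    (fun _ _ _ => by simp only [PiLp.add_apply]; ring)
    (fun _ _ _ => by simp only [PiLp.smul_apply, smul_eq_mul]; ring)

lemma cross2_apply (v w : EuclideanSpace ℝ (Fin 2)) : cross2 v w = v 0 * w 1 - v 1 * w 0 := rfl

lemma cross2_vec2_cos_sin (x y : ℝ) :
    cross2 (vec2 (Real.cos x) (Real.sin x)) (vec2 (Real.cos y) (Real.sin y)) = Real.sin (y - x) := by
  rw [cross2_apply, Real.sin_sub, vec2_apply_zero, vec2_apply_one, vec2_apply_zero, vec2_apply_one]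
  ring

lemma cross2_rotCW_self (φ : ℝ) (v : EuclideanSpace ℝ (Fin 2)) :
    cross2 (rotCW φ v) v = Real.sin φ * dot2 v v := by
  simp only [cross2_apply, rotCW, dot2, vec2_apply_zero, vec2_apply_one]
  ring

lemma cross2_rotCCW_self (φ : ℝ) (v : EuclideanSpace ℝ (Fin 2)) :
    cross2 (rotCCW φ v) v = -(Real.sin φ * dot2 v v) := by
  simp only [cross2_apply, rotCCW, dot2, vec2_apply_zero, vec2_apply_one]
  ring

lemma sarea_eq_cross2 (a b c : EuclideanSpace ℝ (Fin 2)) :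
    sarea a b c = (1/2) * cross2 (b - a) (c - a) := by
  simp only [sarea, cross2_apply, PiLp.sub_apply]
  ring

lemma hasDerivAt_cross2 {v w : ℝ → EuclideanSpace ℝ (Fin 2)} {v' w' : EuclideanSpace ℝ (Fin 2)}
    {t : ℝ} (hv : HasDerivAt v v' t) (hw : HasDerivAt w w' t) :
    HasDerivAt (fun s => cross2 (v s) (w s))
      (cross2 v' (w t) + cross2 (v t) w') t := by
  have coord : ∀ {f : ℝ → EuclideanSpace ℝ (Fin 2)} {f'}, HasDerivAt f f' t →
      ∀ i, HasDerivAt (fun s => f s i) (f' i) t :=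
    fun hf i => by exact (EuclideanSpace.proj i).hasFDerivAt.comp_hasDerivAt t hf
  refine (((coord hv 0).mul (coord hw 1)).sub ((coord hv 1).mul (coord hw 0))).congr_deriv ?_
  simp only [cross2_apply]
  ring

lemma hasDerivAt_sarea {a b c : ℝ → EuclideanSpace ℝ (Fin 2)} {a' b' c' : EuclideanSpace ℝ (Fin 2)}
    {t : ℝ} (ha : HasDerivAt a a' t) (hb : HasDerivAt b b' t) (hc : HasDerivAt c c' t) :
    HasDerivAt (fun s => sarea (a s) (b s) (c s))
      ((1/2) * (cross2 (b' - a') (c t - a t) + cross2 (b t - a t) (c' - a'))) t := by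
  simp only [sarea_eq_cross2]
  exact (hasDerivAt_cross2 (hb.sub ha) (hc.sub ha)).const_mul _

lemma hasDerivAt_sarea_of_eq_lineMap {a b c : ℝ → EuclideanSpace ℝ (Fin 2)}
    {a' b' c' : EuclideanSpace ℝ (Fin 2)} {t lam : ℝ}
    (ha : HasDerivAt a a' t) (hb : HasDerivAt b b' t) (hc : HasDerivAt c c' t)
    (hedge : a t = AffineMap.lineMap (b t) (c t) lam) :
    HasDerivAt (fun s => sarea (a s) (b s) (c s))
      ((1/2) * ((1 - lam) * cross2 b' (c t - b t) + lam * cross2 c' (c t - b t)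
        - cross2 a' (c t - b t))) t := by
  refine (hasDerivAt_sarea ha hb hc).congr_deriv ?_
  rw [hedge, AffineMap.lineMap_apply_module']
  simp only [cross2_apply, PiLp.add_apply, PiLp.sub_apply, PiLp.smul_apply, smul_eq_mul]
  ring

/-- Closed-loop area rate under the edge-phase strategy (equation (18)): under the stated
derivative hypotheses, `t ↦ A(e(t), p_j(t), p_k(t))` has derivative
`½·[ v_j‖e − p_k‖ sin φ_j + v_k‖e − p_j‖ sin φ_k − d_jk μ sin(α − ψ) ]` at `t`. -/
theorem stmt_5 (pj pk e : ℝ → EuclideanSpace ℝ (Fin 2)) (t : ℝ)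
    (djk lam vj vk φj φk μ ψ α : ℝ) (u : EuclideanSpace ℝ (Fin 2))
    (hne : pj t ≠ pk t)
    (hdjk : djk = ‖pk t - pj t‖)
    (hdir : pk t - pj t = djk • vec2 (Real.cos α) (Real.sin α))
    (hu : u = djk⁻¹ • (pk t - pj t))
    (hlam : lam ∈ Set.Icc (0:ℝ) 1)
    (he : e t = pj t + lam • (pk t - pj t))
    (hpj' : HasDerivAt pj (vj • rotCW φj u) t)
    (hpk' : HasDerivAt pk (-(vk • rotCCW φk u)) t)
    (he' : HasDerivAt e (μ • vec2 (Real.cos ψ) (Real.sin ψ)) t) :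
    HasDerivAt (fun s => sarea (e s) (pj s) (pk s))
      ((1/2) * (vj * ‖e t - pk t‖ * Real.sin φj + vk * ‖e t - pj t‖ * Real.sin φk
        - djk * μ * Real.sin (α - ψ))) t := by
  have hdjk_ne : djk ≠ 0 := by
    rw [hdjk]; exact norm_ne_zero_iff.mpr (sub_ne_zero.mpr hne.symm)
  have hu_eq : u = vec2 (Real.cos α) (Real.sin α) := by
    rw [hu, hdir, smul_smul, inv_mul_cancel₀ hdjk_ne, one_smul]
  have hline : e t = AffineMap.lineMap (pj t) (pk t) lam := by
    rw [he, AffineMap.lineMap_apply_module', add_comm]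
  have hdist : dist (pj t) (pk t) = djk := by rw [dist_comm, dist_eq_norm, hdjk]
  have hnej : ‖e t - pj t‖ = lam * djk := by
    rw [← dist_eq_norm, hline, dist_lineMap_left, hdist, Real.norm_of_nonneg hlam.1]
  have hnek : ‖e t - pk t‖ = (1 - lam) * djk := by
    rw [← dist_eq_norm, hline, dist_lineMap_right, hdist,
      Real.norm_of_nonneg (sub_nonneg.mpr hlam.2)]
  convert hasDerivAt_sarea_of_eq_lineMap he' hpj' hpk' hline using 1
  rw [hdir, hu_eq, hnej, hnek]
  simp only [map_smul, map_neg, LinearMap.smul_apply, LinearMap.neg_apply, smul_eq_mul, cross2_rotCW_self,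
    cross2_rotCCW_self, cross2_vec2_cos_sin, dot2_vec2_cos_sin_self]
  ring

end
end

section
/- Let p, e : ℝ → ℝ² have derivatives at time t, with p(t) ≠ e(t), p'(t) = (e(t) − p(t))/‖e(t) − p(t)‖ (pure pursuit at unit speed), and ‖e'(t)‖ ≤ μ_m for some μ_m ∈ [0,1). Then the function t ↦ ‖p(t) − e(t)‖ is differentiable at t and its derivative satisfies d/dt ‖p(t) − e(t)‖ ≤ −(1 − μ_m). -/
/-! The distance `‖p - e‖` changes at rate `⟪u, e'⟫ - 1`, where `u` is the unit line-of-sight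
vector from `p` to `e`: the pursuer closes at unit speed while the evader can open the gap by at
most the component of its velocity along `u`, which Cauchy–Schwarz bounds by `‖e'‖`. -/

open RealInnerProductSpace

variable {F : Type*} [NormedAddCommGroup F] [InnerProductSpace ℝ F]

theorem HasDerivAt.norm {f : ℝ → F} {f' : F} {x : ℝ} (hf : HasDerivAt f f' x) (h0 : f x ≠ 0) :
    HasDerivAt (fun y => ‖f y‖) (⟪f x, f'⟫ / ‖f x‖) x := by
  have hsqrt := hf.norm_sq.sqrt (by positivity)
  simp only [Real.sqrt_sq (norm_nonneg _)] at hsqrt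
  convert hsqrt using 1
  ring

theorem hasDerivAt_norm_sub_of_pursuit {p e : ℝ → F} {e' : F} {t : ℝ} (hne : p t ≠ e t)
    (hp : HasDerivAt p (‖e t - p t‖⁻¹ • (e t - p t)) t) (he : HasDerivAt e e' t) :
    HasDerivAt (fun s => ‖p s - e s‖) (⟪e t - p t, e'⟫ / ‖e t - p t‖ - 1) t := by
  have hd : e t - p t ≠ 0 := sub_ne_zero.2 hne.symm
  refine ((hp.sub he).norm (sub_ne_zero.2 hne)).congr_deriv ?_
  rw [Pi.sub_apply, ← neg_sub (e t), inner_neg_left, norm_neg, inner_sub_right,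
    real_inner_smul_right, real_inner_self_eq_norm_sq]
  field_simp
  ring

theorem real_inner_div_norm_le_norm (x y : F) : ⟪x, y⟫ / ‖x‖ ≤ ‖y‖ :=
  div_le_of_le_mul₀ (norm_nonneg x) (norm_nonneg y) <| by
    rw [mul_comm]
    exact real_inner_le_norm x y

theorem stmt_7_general (p e : ℝ → EuclideanSpace ℝ (Fin 2)) (t μm : ℝ)
    (e' : EuclideanSpace ℝ (Fin 2))
    (hne : p t ≠ e t)
    (hp : HasDerivAt p (‖e t - p t‖⁻¹ • (e t - p t)) t)
    (he : HasDerivAt e e' t) (hbound : ‖e'‖ ≤ μm) :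
    ∃ D : ℝ, HasDerivAt (fun s => ‖p s - e s‖) D t ∧ D ≤ -(1 - μm) :=
  ⟨_, hasDerivAt_norm_sub_of_pursuit hne hp he, by
    linarith [real_inner_div_norm_le_norm (e t - p t) e']⟩

/-- Interior-phase Lyapunov decay: if `p` pursues `e` at unit speed directly toward it
(`p'(t) = (e(t) − p(t))/‖e(t) − p(t)‖`), `p(t) ≠ e(t)` and `‖e'(t)‖ ≤ μ_m < 1`, then
`t ↦ ‖p(t) − e(t)‖` is differentiable at `t` with derivative at most `−(1 − μ_m)`. -/
theorem stmt_7 (p e : ℝ → EuclideanSpace ℝ (Fin 2)) (t μm : ℝ)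
    (hμm : μm ∈ Set.Ico (0:ℝ) 1) (e' : EuclideanSpace ℝ (Fin 2))
    (hne : p t ≠ e t)
    (hp : HasDerivAt p (‖e t - p t‖⁻¹ • (e t - p t)) t)
    (he : HasDerivAt e e' t) (hbound : ‖e'‖ ≤ μm) :
    ∃ D : ℝ, HasDerivAt (fun s => ‖p s - e s‖) D t ∧ D ≤ -(1 - μm) :=
  stmt_7_general p e t μm e' hne hp he hbound
end

section
/- Let n ≥ 3, μ_m ∈ [0,1), and let p_1, …, p_n, e : ℝ → ℝ² have derivatives at time t with p_i(t) ≠ e(t) for all i and ‖e'(t)‖ ≤ μ_m. Suppose two distinct indices j, k satisfy p_j(t) ≠ p_k(t) and e(t) = p_j(t) + λ·(p_k(t) − p_j(t)) for some λ ∈ (0,1), and the active pursuers use the edge strategy p_j'(t) = R_{φ_j}((e(t) − p_j(t))/‖e(t) − p_j(t)‖) and p_k'(t) = R_{φ_k}^T((e(t) − p_k(t))/‖e(t) − p_k(t)‖) with φ_j, φ_k ∈ [arcsin μ_m, π/2 − arcsin(1 − μ_m)], while every other pursuer follows pure pursuit p_i'(t) = (e(t) − p_i(t))/‖e(t) − p_i(t)‖.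 Then V(t) = Σ_{i=1}^n ‖p_i(t) − e(t)‖ is differentiable at t with V'(t) ≤ −n·(1 − μ_m). (Edge-phase Lyapunov bound of Theorem 2.) -/
open Real

noncomputable section

/-!
Each distance `‖p_i − e‖` changes at rate `⟨u_i, e'⟩ − ⟨u_i, p_i'⟩`, where `u_i` is the unit vector
from `p_i` towards `e`. The evader contributes at most `μ_m` per pursuer, except that for the two
active pursuers its contributions cancel: `e` lies strictly between them, so `u_j = −u_k`.
A pure pursuer gains `⟨u_i, u_i⟩ = 1`, an active one `⟨u, R_φ u⟩ = cos φ`, and the admissible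
angles satisfy `cos φ ≥ sin (arcsin (1 − μ_m)) = 1 − μ_m`.
-/

open Finset

theorem Finset.sum_le_sum_of_pair_le {ι M : Type*} [Fintype ι] [DecidableEq ι] [AddCommMonoid M]
    [PartialOrder M] [IsOrderedAddMonoid M] {f g : ι → M} {j k : ι} (hjk : j ≠ k)
    (hpair : f j + f k ≤ g j + g k) (hrest : ∀ i, i ≠ j → i ≠ k → f i ≤ g i) :
    ∑ i, f i ≤ ∑ i, g i := by
  have hk : k ∈ univ.erase j := mem_erase.2 ⟨hjk.symm, mem_univ k⟩
  rw [← add_sum_erase _ f (mem_univ j), ← add_sum_erase _ f hk,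
    ← add_sum_erase _ g (mem_univ j), ← add_sum_erase _ g hk, ← add_assoc, ← add_assoc]
  refine add_le_add hpair (sum_le_sum fun i hi => ?_)
  obtain ⟨hik, hi⟩ := mem_erase.1 hi
  exact hrest i (mem_erase.1 hi).1 hik

section UnitDirection

variable {E : Type*} [NormedAddCommGroup E] [InnerProductSpace ℝ E]

def unitDir (x y : E) : E := ‖y - x‖⁻¹ • (y - x)

theorem norm_unitDir {x y : E} (h : x ≠ y) : ‖unitDir x y‖ = 1 := by
  rw [unitDir, norm_smul, norm_inv, norm_norm,
    inv_mul_cancel₀ (norm_ne_zero_iff.2 (sub_ne_zero.2 h.symm))]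

theorem unitDir_eq_neg_unitDir_of_eq_add_smul {a b e : E} {lam : ℝ}
    (hlam : lam ∈ Set.Ioo (0:ℝ) 1) (he : e = a + lam • (b - a)) :
    unitDir a e = -unitDir b e := by
  have ha : e - a = lam • (b - a) := by rw [he]; abel
  have hb : e - b = -((1 - lam) • (b - a)) := by rw [he, sub_smul, one_smul]; abel
  have h0 : lam ≠ 0 := hlam.1.ne'
  have h1 : 1 - lam ≠ 0 := (sub_pos.2 hlam.2).ne'
  rw [unitDir, unitDir, ha, hb, norm_neg, norm_smul, norm_smul, Real.norm_of_nonneg hlam.1.le,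
    Real.norm_of_nonneg (sub_pos.2 hlam.2).le, smul_neg, neg_neg, smul_smul, smul_smul]
  congr 1
  field_simp

theorem hasDerivAt_norm_sub {p e : ℝ → E} {p' e' : E} {t : ℝ} (hp : HasDerivAt p p' t)
    (he : HasDerivAt e e' t) (hne : p t ≠ e t) :
    HasDerivAt (fun s => ‖p s - e s‖) (inner ℝ (unitDir (p t) (e t)) (e' - p')) t := by
  have hpos : 0 < ‖p t - e t‖ := norm_pos_iff.2 (sub_ne_zero.2 hne)
  have h := ((hp.sub he).norm_sq.sqrt (by positivity)).congr_of_eventuallyEq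
    (.of_forall fun s => (Real.sqrt_sq (norm_nonneg (p s - e s))).symm)
  refine h.congr_deriv ?_
  rw [Pi.sub_apply, Real.sqrt_sq hpos.le, unitDir, ← neg_sub (p t), ← neg_sub p', norm_neg,
    real_inner_smul_left, inner_neg_neg]
  field_simp

end UnitDirection

theorem Real.le_cos_of_le_pi_div_two_sub_arcsin {x φ : ℝ} (hx₁ : -1 ≤ x) (hx₂ : x ≤ 1)
    (hφ₀ : 0 ≤ φ) (hφ : φ ≤ π / 2 - arcsin x) : x ≤ cos φ := by
  have hπ : π / 2 - arcsin x ≤ π := by linarith [neg_pi_div_two_le_arcsin x]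
  simpa [cos_pi_div_two_sub, sin_arcsin hx₁ hx₂] using cos_le_cos_of_nonneg_of_le_pi hφ₀ hπ hφ

theorem inner_rotCW_self (φ : ℝ) (v : EuclideanSpace ℝ (Fin 2)) :
    inner ℝ v (rotCW φ v) = cos φ * ‖v‖ ^ 2 := by
  simp only [rotCW, vec2, WithLp.equiv_symm_apply, PiLp.inner_apply, RCLike.inner_apply,
    ringHom_apply, Fin.sum_univ_two, Matrix.cons_val_zero, Matrix.cons_val_one,
    EuclideanSpace.real_norm_sq_eq]
  ring

theorem inner_rotCCW_self (φ : ℝ) (v : EuclideanSpace ℝ (Fin 2)) :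
    inner ℝ v (rotCCW φ v) = cos φ * ‖v‖ ^ 2 := by
  simp only [rotCCW, vec2, WithLp.equiv_symm_apply, PiLp.inner_apply, RCLike.inner_apply,
    ringHom_apply, Fin.sum_univ_two, Matrix.cons_val_zero, Matrix.cons_val_one,
    EuclideanSpace.real_norm_sq_eq]
  ring

open Real in
theorem stmt_13_general (n : ℕ) (μm : ℝ) (hμm : μm ∈ Set.Ico (0:ℝ) 1)
    (p : Fin n → ℝ → EuclideanSpace ℝ (Fin 2)) (e : ℝ → EuclideanSpace ℝ (Fin 2))
    (t : ℝ) (e' : EuclideanSpace ℝ (Fin 2))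
    (j k : Fin n) (hjk : j ≠ k) (lam φj φk : ℝ)
    (hne : ∀ i, p i t ≠ e t)
    (hlam : lam ∈ Set.Ioo (0:ℝ) 1)
    (heEdge : e t = p j t + lam • (p k t - p j t))
    (hφj : φj ∈ Set.Icc (Real.arcsin μm) (π/2 - Real.arcsin (1 - μm)))
    (hφk : φk ∈ Set.Icc (Real.arcsin μm) (π/2 - Real.arcsin (1 - μm)))
    (hpj : HasDerivAt (p j) (rotCW φj (‖e t - p j t‖⁻¹ • (e t - p j t))) t)
    (hpk : HasDerivAt (p k) (rotCCW φk (‖e t - p k t‖⁻¹ • (e t - p k t))) t)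
    (hothers : ∀ i, i ≠ j → i ≠ k →
      HasDerivAt (p i) (‖e t - p i t‖⁻¹ • (e t - p i t)) t)
    (he : HasDerivAt e e' t) (hbound : ‖e'‖ ≤ μm) :
    ∃ D : ℝ, HasDerivAt (fun s => ∑ i, ‖p i s - e s‖) D t ∧ D ≤ -(n * (1 - μm)) := by
  obtain ⟨hμ₀, hμ₁⟩ := hμm
  set u : Fin n → EuclideanSpace ℝ (Fin 2) := fun i => unitDir (p i t) (e t)
  have hu : ∀ i, ‖u i‖ = 1 := fun i => norm_unitDir (hne i)
  have hevader : ∀ i, inner ℝ (u i) e' ≤ μm := fun i =>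
    (real_inner_le_norm _ _).trans (by rw [hu i, one_mul]; exact hbound)
  have hcos : ∀ φ ∈ Set.Icc (arcsin μm) (π/2 - arcsin (1 - μm)), 1 - μm ≤ cos φ :=
    fun φ hφ => le_cos_of_le_pi_div_two_sub_arcsin (by linarith) (by linarith)
      ((arcsin_nonneg.2 hμ₀).trans hφ.1) hφ.2
  have hdiff : ∀ i, DifferentiableAt ℝ (p i) t := fun i =>
    if hij : i = j then hij ▸ hpj.differentiableAt
    else if hik : i = k then hik ▸ hpk.differentiableAt
    else (hothers i hij hik).differentiableAt
  refine ⟨∑ i, inner ℝ (u i) (e' - deriv (p i) t),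
    HasDerivAt.fun_sum fun i _ => hasDerivAt_norm_sub (hdiff i).hasDerivAt he (hne i), ?_⟩
  calc ∑ i, inner ℝ (u i) (e' - deriv (p i) t) ≤ ∑ _i : Fin n, -(1 - μm) := by
        refine sum_le_sum_of_pair_le hjk ?_ fun i hij hik => ?_
        · have hcancel : inner ℝ (u j) e' + inner ℝ (u k) e' = 0 := by
            rw [show u j = -u k from unitDir_eq_neg_unitDir_of_eq_add_smul hlam heEdge,
              inner_neg_left, neg_add_cancel]
          have hj : deriv (p j) t = rotCW φj (u j) := hpj.deriv
          have hk : deriv (p k) t = rotCCW φk (u k) := hpk.deriv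
          rw [hj, hk, inner_sub_right, inner_sub_right, inner_rotCW_self, inner_rotCCW_self,
            hu, hu]
          linarith [hcos φj hφj, hcos φk hφk]
        · have hi : deriv (p i) t = u i := (hothers i hij hik).deriv
          rw [hi, inner_sub_right, real_inner_self_eq_norm_sq, hu]
          linarith [hevader i]
    _ = -(n * (1 - μm)) := by rw [sum_const, card_univ, Fintype.card_fin, nsmul_eq_mul]; ring

open Real in
/-- Edge-phase Lyapunov bound of Theorem 2: with the evader strictly on the active edge
`p_j p_k`, the active pursuers using the rotated edge strategy with angles in
`[arcsin μ_m, π/2 − arcsin(1 − μ_m)]`, and all other pursuers in pure pursuit,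
`V(t) = Σ_i ‖p_i(t) − e(t)‖` is differentiable at `t` with `V'(t) ≤ −n(1 − μ_m)`. -/
theorem stmt_13 (n : ℕ) (hn : 3 ≤ n) (μm : ℝ) (hμm : μm ∈ Set.Ico (0:ℝ) 1)
    (p : Fin n → ℝ → EuclideanSpace ℝ (Fin 2)) (e : ℝ → EuclideanSpace ℝ (Fin 2))
    (t : ℝ) (e' : EuclideanSpace ℝ (Fin 2))
    (j k : Fin n) (hjk : j ≠ k) (lam φj φk : ℝ)
    (hne : ∀ i, p i t ≠ e t)
    (hpjk : p j t ≠ p k t) (hlam : lam ∈ Set.Ioo (0:ℝ) 1)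
    (heEdge : e t = p j t + lam • (p k t - p j t))
    (hφj : φj ∈ Set.Icc (Real.arcsin μm) (π/2 - Real.arcsin (1 - μm)))
    (hφk : φk ∈ Set.Icc (Real.arcsin μm) (π/2 - Real.arcsin (1 - μm)))
    (hpj : HasDerivAt (p j) (rotCW φj (‖e t - p j t‖⁻¹ • (e t - p j t))) t)
    (hpk : HasDerivAt (p k) (rotCCW φk (‖e t - p k t‖⁻¹ • (e t - p k t))) t)
    (hothers : ∀ i, i ≠ j → i ≠ k →
      HasDerivAt (p i) (‖e t - p i t‖⁻¹ • (e t - p i t)) t)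
    (he : HasDerivAt e e' t) (hbound : ‖e'‖ ≤ μm) :
    ∃ D : ℝ, HasDerivAt (fun s => ∑ i, ‖p i s - e s‖) D t ∧ D ≤ -(n * (1 - μm)) :=
  stmt_13_general n μm hμm p e t e' j k hjk lam φj φk hne hlam heEdge hφj hφk hpj hpk hothers he
    hbound

end
end
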